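/- arXiv:1002.0434 — 2 statements merged into one kernel-verified Lean document; each statement's English description precedes it below -/
import Mathlib

section
/- Let φ : A → B be a natural transformation between functors from k-modules to k-modules which both preserve filtered colimits. If γ_n(φ) : γ_n(A) → γ_n(B) is an isomorphism for every n ≥ 1, and additionally A(0) → B(0) is an isomorphism, then φ_V : A(V) → B(V) is an isomorphism for every k-module V. -/
open CategoryTheory

noncomputable def Vbar (k : Type) [Field k] (n : ℕ) : ModuleCat k :=
  ModuleCat.of k (Fin n → k)

noncomputable def dmap (k : Type) [Field k] (n : ℕ) (i : Fin (n + 1)) :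
    Vbar k (n + 1) ⟶ Vbar k n :=
  ModuleCat.ofHom (LinearMap.funLeft k k (Fin.succAbove i))

/-- `γ_{n+1}(B) = ∩_i Ker(B(d_i)) ⊆ B(V̄_{n+1})`. -/
noncomputable def gammaF (k : Type) [Field k] (n : ℕ) (B : ModuleCat k ⥤ ModuleCat k) :
    Submodule k (B.obj (Vbar k (n + 1))) :=
  ⨅ i : Fin (n + 1), LinearMap.ker (B.map (dmap k n i)).hom


/-! By induction on `n`, `φ` is bijective on `V̄_n`. If `φ x = 0` for `x ∈ A(V̄_{n+1})`, then all
faces of `x` are killed by the injective `φ_{V̄_n}`, so `x ∈ γ_{n+1}(A)` and `x = 0`. For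
surjectivity, let `s_j : V̄_n → V̄_{n+1}` insert a zero coordinate at position `j`, so that
`d_j s_j = 1`, while for `i ≠ j` the composite `d_i s_j d_j` factors through `d_i`. Replacing
`y ∈ B(V̄_{n+1})` by `y - B(s_j d_j) y` therefore kills the face `d_j` without reviving the faces
already killed, and changes `y` by an element of the image of `φ`, since `B(d_j) y` is one. Once
every face vanishes, `y ∈ γ_{n+1}(B)`, which is in the image of `φ`.

Every finite-dimensional space is isomorphic to some `V̄_n`, and every module is the filtered
colimit of its finitely generated submodules, which both functors preserve. -/

open Limits

universe u v w

noncomputable def smap (k : Type) [Field k] (n : ℕ) (j : Fin (n + 1)) :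
    Vbar k n ⟶ Vbar k (n + 1) :=
  ModuleCat.ofHom (Function.ExtendByZero.linearMap k (Fin.succAbove j))

noncomputable def zeroCoord (k : Type) [Field k] {m : ℕ} (j : Fin m) : Vbar k m ⟶ Vbar k m :=
  ModuleCat.ofHom (LinearMap.pi fun t => if t = j then 0 else LinearMap.proj t)

section Faces

variable {k : Type} [Field k] {n : ℕ}

lemma dmap_apply (i : Fin (n + 1)) (g : Vbar k (n + 1)) :
    (dmap k n i).hom g = g ∘ i.succAbove :=
  rfl

lemma smap_apply (j : Fin (n + 1)) (g : Vbar k n) :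
    (smap k n j).hom g = Function.extend j.succAbove g 0 :=
  rfl

lemma zeroCoord_apply {m : ℕ} (j : Fin m) (g : Vbar k m) (t : Fin m) :
    (zeroCoord k j).hom g t = if t = j then 0 else g t := by
  change (if t = j then (0 : (Fin m → k) →ₗ[k] k) else LinearMap.proj t) g = _
  split_ifs <;> rfl

lemma smap_dmap (j : Fin (n + 1)) : smap k n j ≫ dmap k n j = 𝟙 (Vbar k n) := by
  ext g; funext t
  exact Fin.succAbove_right_injective.extend_apply g 0 t

lemma dmap_smap (j : Fin (n + 1)) : dmap k n j ≫ smap k n j = zeroCoord k j := by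
  ext g; funext t
  rw [ModuleCat.hom_comp, LinearMap.comp_apply, zeroCoord_apply, smap_apply, dmap_apply]
  split_ifs with h
  · subst h
    exact Function.extend_apply' _ _ _ fun ⟨u, hu⟩ => Fin.succAbove_ne t u hu
  · obtain ⟨u, rfl⟩ := Fin.exists_succAbove_eq h
    exact Fin.succAbove_right_injective.extend_apply _ 0 u

lemma zeroCoord_dmap {i j : Fin (n + 1)} {j' : Fin n} (h : i.succAbove j' = j) :
    zeroCoord k j ≫ dmap k n i = dmap k n i ≫ zeroCoord k j' := by
  ext g; funext t
  change (zeroCoord k j).hom g (i.succAbove t) = (zeroCoord k j').hom ((dmap k n i).hom g) t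
  simp only [zeroCoord_apply, ← h, Fin.succAbove_right_inj]
  rfl

lemma mem_gammaF_iff {F : ModuleCat.{0} k ⥤ ModuleCat.{w} k} {x : F.obj (Vbar k (n + 1))} :
    x ∈ gammaF k n F ↔ ∀ i, F.map (dmap k n i) x = 0 := by
  simp only [gammaF, Submodule.mem_iInf, LinearMap.mem_ker]

variable (B : ModuleCat.{0} k ⥤ ModuleCat.{w} k)

lemma map_dmap_map_smap (j : Fin (n + 1)) (z : B.obj (Vbar k n)) :
    B.map (dmap k n j) (B.map (smap k n j) z) = z := by
  rw [← Functor.map_comp_apply, smap_dmap, B.map_id, ConcreteCategory.id_apply]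

lemma map_dmap_map_smap_map_dmap_eq_zero {i j : Fin (n + 1)} (hij : i ≠ j)
    {y : B.obj (Vbar k (n + 1))} (hy : B.map (dmap k n i) y = 0) :
    B.map (dmap k n i) (B.map (smap k n j) (B.map (dmap k n j) y)) = 0 := by
  obtain ⟨j', hj'⟩ := Fin.exists_succAbove_eq hij.symm
  rw [← Functor.map_comp_apply, ← Functor.map_comp_apply, ← Category.assoc, dmap_smap,
    zeroCoord_dmap hj', Functor.map_comp_apply, hy, map_zero]

end Faces

section Induction

variable {k : Type} [Field k] {n : ℕ} {A B : ModuleCat.{0} k ⥤ ModuleCat.{w} k} (φ : A ⟶ B)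

theorem injective_app_Vbar_succ (hγ : Set.InjOn (φ.app (Vbar k (n + 1))) (gammaF k n A))
    (hn : Function.Injective (φ.app (Vbar k n))) :
    Function.Injective (φ.app (Vbar k (n + 1))) := by
  refine (injective_iff_map_eq_zero (φ.app (Vbar k (n + 1))).hom).2 fun x hx => ?_
  have hxγ : x ∈ gammaF k n A := mem_gammaF_iff.2 fun i =>
    hn (by rw [NatTrans.naturality_apply, hx, map_zero, map_zero])
  exact hγ hxγ (zero_mem _) (by rw [hx, map_zero])

theorem mem_range_app_Vbar_succ
    (hγ : Set.SurjOn (φ.app (Vbar k (n + 1))) (gammaF k n A) (gammaF k n B))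
    (hn : Function.Surjective (φ.app (Vbar k n))) :
    ∀ (m : ℕ) (y : B.obj (Vbar k (n + 1))),
      (∀ i : Fin (n + 1), m ≤ i → B.map (dmap k n i) y = 0) →
      y ∈ Set.range (φ.app (Vbar k (n + 1)))
  | 0, y, hy => Set.image_subset_range _ _ (hγ (mem_gammaF_iff.2 fun i => hy i i.val.zero_le))
  | m + 1, y, hy => by
    by_cases hm : n + 1 ≤ m
    · exact mem_range_app_Vbar_succ hγ hn m y fun i hi => absurd i.is_lt (by omega)
    set j : Fin (n + 1) := ⟨m, by omega⟩
    obtain ⟨a, ha⟩ := hn (B.map (dmap k n j) y)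
    have hker : ∀ i : Fin (n + 1), m ≤ i →
        B.map (dmap k n i) (y - B.map (smap k n j) (B.map (dmap k n j) y)) = 0 := by
      intro i hi
      rw [map_sub]
      rcases eq_or_ne i j with rfl | hij
      · rw [map_dmap_map_smap, sub_self]
      · have hyi := hy i (by have : (i : ℕ) ≠ m := fun h => hij (Fin.ext h); omega)
        rw [map_dmap_map_smap_map_dmap_eq_zero B hij hyi, hyi, sub_zero]
    obtain ⟨x, hx⟩ := mem_range_app_Vbar_succ hγ hn m _ hker
    exact ⟨x + A.map (smap k n j) a, by
      rw [map_add, hx, NatTrans.naturality_apply, ha, sub_add_cancel]⟩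

theorem bijective_app_Vbar
    (hγ : ∀ n : ℕ, Set.BijOn (φ.app (Vbar k (n + 1))) (gammaF k n A) (gammaF k n B))
    (h0 : Function.Bijective (φ.app (Vbar k 0))) :
    ∀ n : ℕ, Function.Bijective (φ.app (Vbar k n))
  | 0 => h0
  | n + 1 =>
    have ih := bijective_app_Vbar hγ h0 n
    ⟨injective_app_Vbar_succ φ (hγ n).injOn ih.1, fun y =>
      mem_range_app_Vbar_succ φ (hγ n).surjOn ih.2 (n + 1) y fun i hi => absurd i.is_lt (by omega)⟩

end Induction

theorem isIso_app_of_finiteDimensional {k : Type} [Field k] {D : Type*} [Category D]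
    {A B : ModuleCat.{0} k ⥤ D} (φ : A ⟶ B) (h : ∀ n, IsIso (φ.app (Vbar k n)))
    (W : ModuleCat k) [FiniteDimensional k W] : IsIso (φ.app W) :=
  (NatTrans.isIso_app_iff_of_iso φ
    ((Module.finBasis k W).equivFun.toModuleIso : W ≅ Vbar k (Module.finrank k W))).2 (h _)

theorem isIso_app_of_forall_finite {R : Type u} [Ring R] {D : Type*} [Category D]
    {A B : ModuleCat.{v} R ⥤ D}
    [PreservesFilteredColimitsOfSize.{v, v} A] [PreservesFilteredColimitsOfSize.{v, v} B]
    (φ : A ⟶ B) (h : ∀ W : ModuleCat.{v} R, Module.Finite R W → IsIso (φ.app W))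
    (V : ModuleCat.{v} R) : IsIso (φ.app V) := by
  classical
  let G := ModuleCat.directLimitDiagram (fun N : {N : Submodule R V // N.FG} => N.1)
    (Module.fgSystem R V)
  have (N : {N : Submodule R V // N.FG}) : IsIso ((Functor.whiskerLeft G φ).app N) :=
    h _ (Module.Finite.iff_fg.2 N.2)
  have := NatIso.isIso_of_isIso_app (Functor.whiskerLeft G φ)
  have := isIso_app_coconePt_of_preservesColimit G φ _ (ModuleCat.directLimitIsColimit _ _)
  exact (NatTrans.isIso_app_iff_of_iso φ (Module.fgSystem.equiv R V).toModuleIso).1 this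

/-- If `φ : A → B` is a natural transformation between functors preserving filtered colimits such
that `γ_n(φ)` is an isomorphism for all `n ≥ 1` and `A(0) → B(0)` is an isomorphism, then
`φ_V : A(V) → B(V)` is an isomorphism for every `k`-module `V`. -/
theorem stmt5 (k : Type) [Field k] (A B : ModuleCat k ⥤ ModuleCat k)
    [Limits.PreservesFilteredColimits A] [Limits.PreservesFilteredColimits B]
    (φ : A ⟶ B)
    (hγ : ∀ n : ℕ, Set.BijOn (φ.app (Vbar k (n + 1)))
        (gammaF k n A : Set (A.obj (Vbar k (n + 1))))
        (gammaF k n B : Set (B.obj (Vbar k (n + 1)))))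
    (h0 : Function.Bijective (φ.app (Vbar k 0))) :
    ∀ V : ModuleCat k, Function.Bijective (φ.app V) := by
  have := preservesSmallestFilteredColimits_of_preservesFilteredColimits A
  have := preservesSmallestFilteredColimits_of_preservesFilteredColimits B
  have hVbar (n : ℕ) : IsIso (φ.app (Vbar k n)) :=
    (ConcreteCategory.isIso_iff_bijective _).2 (bijective_app_Vbar φ hγ h0 n)
  intro V
  rw [← ConcreteCategory.isIso_iff_bijective]
  exact isIso_app_of_forall_finite φ (fun W _ => isIso_app_of_finiteDimensional φ hVbar W) V
end

section
/- Let k be a field of characteristic 2 and V a k-vector space with dim V ≥ 1. Let L_2^res(V) ⊆ V^{⊗2} be the span of all a⊗a and a⊗b − b⊗a for a,b ∈ V, and L_2(V) the span of a⊗b − b⊗a. Then γ_2(L_2^res) = γ_2(L_2) is the 1-dimensional trivial k(Σ_2)-module spanned by x_1⊗x_2 + x_2⊗x_1, the coinvariants γ_2(L_2^res) ⊗_{k(Σ_2)} V^{⊗2} are isomorphic to the symmetric square S_2(V), and the natural map γ_2(L_2^res) ⊗_{k(Σ_2)} V^{⊗2} → L_2^res(V) has image exactly L_2(V), hence is not surjective.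 -/
open scoped TensorProduct

section
variable (k : Type) [Field k]

/-- `L_2(V) ⊆ V ⊗ V`: the span of the commutators `a ⊗ b - b ⊗ a`. -/
noncomputable def L2 (V : Type) [AddCommGroup V] [Module k V] : Submodule k (V ⊗[k] V) :=
  Submodule.span k {x | ∃ a b : V, x = a ⊗ₜ[k] b - b ⊗ₜ[k] a}

/-- `L_2^{res}(V) ⊆ V ⊗ V`: the span of the squares `a ⊗ a` and commutators `a ⊗ b - b ⊗ a`. -/
noncomputable def L2res (V : Type) [AddCommGroup V] [Module k V] : Submodule k (V ⊗[k] V) :=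
  Submodule.span k ({x | ∃ a : V, x = a ⊗ₜ[k] a} ∪ {x | ∃ a b : V, x = a ⊗ₜ[k] b - b ⊗ₜ[k] a})

/-- The symmetric square `S_2(V) = (V ⊗ V)/(a ⊗ b - b ⊗ a)`. -/
noncomputable abbrev S2 (V : Type) [AddCommGroup V] [Module k V] :=
  (V ⊗[k] V) ⧸ Submodule.span k {x : V ⊗[k] V | ∃ a b : V, x = a ⊗ₜ[k] b - b ⊗ₜ[k] a}

/-- The face map `d_i : V̄_2 → V̄_1`. -/
noncomputable def dd (i : Fin 2) :
    ((Fin 2 → k) ⊗[k] (Fin 2 → k)) →ₗ[k] ((Fin 1 → k) ⊗[k] (Fin 1 → k)) :=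
  TensorProduct.map (LinearMap.funLeft k k (Fin.succAbove i))
    (LinearMap.funLeft k k (Fin.succAbove i))

/-- The transposition acting on `V̄_2` by `x_1 ↔ x_2`. -/
noncomputable def swapV : (Fin 2 → k) →ₗ[k] (Fin 2 → k) :=
  LinearMap.funLeft k k ⇑(Equiv.swap (0 : Fin 2) 1)

/-- `γ_2(B) = B(V̄_2) ∩ Ker B(d_1) ∩ Ker B(d_2)` for a submodule functor `B` of `T_2`. -/
noncomputable def gamma2Of (B : Submodule k ((Fin 2 → k) ⊗[k] (Fin 2 → k))) :
    Submodule k ((Fin 2 → k) ⊗[k] (Fin 2 → k)) :=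
  B ⊓ LinearMap.ker (dd k 0) ⊓ LinearMap.ker (dd k 1)

end

/-!
An element of `Ker d_0 ∩ Ker d_1` has no `x₁ ⊗ x₁` or `x₂ ⊗ x₂` component, and in characteristic
`2` every element of `L_2^res` is a symmetric tensor (`b ⊗ a - a ⊗ b = a ⊗ b - b ⊗ a`). So
`γ_2(L_2^res)` and `γ_2(L_2)` are both the line through `x₁ ⊗ x₂ + x₂ ⊗ x₁ = x₁ ⊗ x₂ - x₂ ⊗ x₁`,
on which the transposition acts trivially. Tensoring over `k(Σ_2)` with this trivial line turns
`V^{⊗2}` into its quotient by the image `L_2(V)` of `v ↦ v - τ v`, i.e. into `S_2(V)`, and the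
natural map becomes `v ↦ v - τ v` itself, whose image `L_2(V)` misses `a ⊗ a` for `a ≠ 0`
because `φ ⊗ φ` vanishes on `L_2(V)` for every functional `φ`.
-/

open TensorProduct

section TensorSquare

variable (k : Type) [Field k] (V : Type) [AddCommGroup V] [Module k V]

noncomputable def antisymmetrize : V ⊗[k] V →ₗ[k] V ⊗[k] V :=
  LinearMap.id - (TensorProduct.comm k V V).toLinearMap

variable {k V}

@[simp]
lemma antisymmetrize_apply (z : V ⊗[k] V) :
    antisymmetrize k V z = z - TensorProduct.comm k V V z := rfl

lemma antisymmetrize_tmul (a b : V) :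
    antisymmetrize k V (a ⊗ₜ b) = a ⊗ₜ b - b ⊗ₜ a := rfl

variable (k V)

lemma range_antisymmetrize : LinearMap.range (antisymmetrize k V) = L2 k V := by
  apply le_antisymm
  · rintro _ ⟨z, rfl⟩
    induction z using TensorProduct.induction_on with
    | zero => simp
    | tmul a b => exact Submodule.subset_span ⟨a, b, rfl⟩
    | add x y hx hy => rw [map_add]; exact add_mem hx hy
  · rw [L2, Submodule.span_le]
    rintro _ ⟨a, b, rfl⟩
    exact ⟨a ⊗ₜ b, rfl⟩

lemma L2_le_L2res : L2 k V ≤ L2res k V :=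
  Submodule.span_mono Set.subset_union_right

lemma L2res_le_ker_antisymmetrize [CharP k 2] :
    L2res k V ≤ LinearMap.ker (antisymmetrize k V) := by
  rw [L2res, Submodule.span_le]
  rintro _ (⟨a, rfl⟩ | ⟨a, b, rfl⟩) <;>
    simp only [SetLike.mem_coe, LinearMap.mem_ker, map_sub, antisymmetrize_tmul, sub_self]
  rw [← neg_sub (b ⊗ₜ a), ← neg_one_smul k, CharTwo.neg_eq, one_smul, sub_self]

variable {k V}

lemma tmul_self_notMem_L2 {a : V} (ha : a ≠ 0) : a ⊗ₜ[k] a ∉ L2 k V := by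
  obtain ⟨φ, hφ⟩ : ∃ φ : Module.Dual k V, φ a ≠ 0 := by
    by_contra! h
    exact ha ((Module.forall_dual_apply_eq_zero_iff k a).mp h)
  have hL2 : L2 k V ≤ LinearMap.ker (dualDistrib k V V (φ ⊗ₜ φ)) := by
    rw [L2, Submodule.span_le]
    rintro _ ⟨b, c, rfl⟩
    simp only [SetLike.mem_coe, LinearMap.mem_ker, map_sub, dualDistrib_apply]
    ring
  intro h
  have := hL2 h
  rw [LinearMap.mem_ker, dualDistrib_apply] at this
  exact mul_ne_zero hφ hφ this

lemma L2_ne_L2res {a : V} (ha : a ≠ 0) : L2 k V ≠ L2res k V := fun h =>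
  tmul_self_notMem_L2 ha <|
    h ▸ show a ⊗ₜ[k] a ∈ L2res k V from Submodule.subset_span (Or.inl ⟨a, rfl⟩)

end TensorSquare

section TwoVariables

variable (k : Type) [Field k]

local notation "x₁" => (Pi.single 0 1 : Fin 2 → k)
local notation "x₂" => (Pi.single 1 1 : Fin 2 → k)

noncomputable abbrev tensorBasis : Module.Basis (Fin 2 × Fin 2) k ((Fin 2 → k) ⊗[k] (Fin 2 → k)) :=
  (Pi.basisFun k (Fin 2)).tensorProduct (Pi.basisFun k (Fin 2))

noncomputable def symTensor12 : (Fin 2 → k) ⊗[k] (Fin 2 → k) := x₁ ⊗ₜ x₂ + x₂ ⊗ₜ x₁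

variable {k}

lemma tensorBasis_repr_tmul (a b : Fin 2 → k) (i j : Fin 2) :
    (tensorBasis k).repr (a ⊗ₜ b) (i, j) = a i * b j := by
  simp [mul_comm]

lemma tensorBasis_repr_comm (z : (Fin 2 → k) ⊗[k] (Fin 2 → k)) (i j : Fin 2) :
    (tensorBasis k).repr (TensorProduct.comm k _ _ z) (i, j) = (tensorBasis k).repr z (j, i) := by
  induction z using TensorProduct.induction_on with
  | zero => simp
  | tmul a b => rw [comm_tmul, tensorBasis_repr_tmul, tensorBasis_repr_tmul, mul_comm]
  | add x y hx hy => simp only [map_add, Finsupp.add_apply, hx, hy]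

lemma tensorBasis_repr_symTensor12 (i j : Fin 2) :
    (tensorBasis k).repr (symTensor12 k) (i, j) = if i = j then 0 else 1 := by
  fin_cases i <;> fin_cases j <;> simp [symTensor12]

lemma symTensor12_ne_zero : symTensor12 k ≠ 0 := fun h => by
  simpa [tensorBasis_repr_symTensor12] using congrArg (fun z => (tensorBasis k).repr z (0, 1)) h

lemma tensorBasis_repr_diag_eq_zero_of_mem_ker_dd (i : Fin 2) {z : (Fin 2 → k) ⊗[k] (Fin 2 → k)}
    (hz : z ∈ LinearMap.ker (dd k i)) :
    (tensorBasis k).repr z (i.succAbove 0, i.succAbove 0) = 0 := by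
  have hfactor : (tensorBasis k).coord (i.succAbove 0, i.succAbove 0)
      = dualDistrib k _ _ (LinearMap.proj 0 ⊗ₜ LinearMap.proj 0) ∘ₗ dd k i :=
    TensorProduct.ext' fun a b => by simp [dd, LinearMap.funLeft_apply, mul_comm]
  rw [← Module.Basis.coord_apply, hfactor, LinearMap.comp_apply, LinearMap.mem_ker.mp hz, map_zero]

lemma tensorBasis_repr_symm_of_mem_L2res [CharP k 2] {z : (Fin 2 → k) ⊗[k] (Fin 2 → k)}
    (hz : z ∈ L2res k (Fin 2 → k)) (i j : Fin 2) :
    (tensorBasis k).repr z (i, j) = (tensorBasis k).repr z (j, i) := by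
  have hcomm : TensorProduct.comm k _ _ z = z :=
    (sub_eq_zero.mp (L2res_le_ker_antisymmetrize k _ hz)).symm
  rw [← tensorBasis_repr_comm, hcomm]

lemma funLeft_succAbove_single_self {n : ℕ} (i : Fin (n + 1)) (c : k) :
    LinearMap.funLeft k k i.succAbove (Pi.single i c) = 0 := by
  funext j
  simp [LinearMap.funLeft_apply, Fin.succAbove_ne]

lemma symTensor12_mem_ker_dd (i : Fin 2) : symTensor12 k ∈ LinearMap.ker (dd k i) := by
  rw [LinearMap.mem_ker, symTensor12, map_add, dd, map_tmul, map_tmul]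
  obtain rfl | rfl : i = 0 ∨ i = 1 := by fin_cases i <;> simp
  all_goals rw [funLeft_succAbove_single_self, zero_tmul, tmul_zero, add_zero]

lemma symTensor12_eq_sub [CharP k 2] : symTensor12 k = x₁ ⊗ₜ x₂ - x₂ ⊗ₜ x₁ := by
  rw [symTensor12, sub_eq_add_neg, ← neg_one_smul k, CharTwo.neg_eq, one_smul]

lemma symTensor12_mem_L2 [CharP k 2] : symTensor12 k ∈ L2 k (Fin 2 → k) :=
  Submodule.subset_span ⟨x₁, x₂, symTensor12_eq_sub⟩

lemma gamma2Of_eq_span_symTensor12 [CharP k 2] {B : Submodule k ((Fin 2 → k) ⊗[k] (Fin 2 → k))}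
    (hB : B ≤ L2res k (Fin 2 → k)) (ht : symTensor12 k ∈ B) :
    gamma2Of k B = Submodule.span k {symTensor12 k} := by
  apply le_antisymm
  · rintro z ⟨⟨hzB, hz0⟩, hz1⟩
    have h11 := tensorBasis_repr_diag_eq_zero_of_mem_ker_dd 0 hz0
    have h00 := tensorBasis_repr_diag_eq_zero_of_mem_ker_dd 1 hz1
    have h10 := tensorBasis_repr_symm_of_mem_L2res (hB hzB) 1 0
    refine Submodule.mem_span_singleton.mpr ⟨(tensorBasis k).repr z (0, 1), ?_⟩
    rw [(tensorBasis k).ext_elem_iff]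
    rintro ⟨i, j⟩
    fin_cases i <;> fin_cases j <;> simp_all [tensorBasis_repr_symTensor12]
  · rw [Submodule.span_le, Set.singleton_subset_iff]
    exact ⟨⟨ht, symTensor12_mem_ker_dd 0⟩, symTensor12_mem_ker_dd 1⟩

lemma map_swapV_symTensor12 :
    TensorProduct.map (swapV k) (swapV k) (symTensor12 k) = symTensor12 k := by
  have h0 : swapV k x₁ = x₂ := by
    funext i; fin_cases i <;> simp [swapV, LinearMap.funLeft_apply]
  have h1 : swapV k x₂ = x₁ := by
    funext i; fin_cases i <;> simp [swapV, LinearMap.funLeft_apply]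
  rw [symTensor12, map_add, map_tmul, map_tmul, h0, h1, add_comm]

end TwoVariables

section Coinvariants

variable {k : Type} [Field k] {G : Type} [AddCommGroup G] [Module k G]

lemma exists_linearEquiv_of_range_eq_span {M : Type} [AddCommGroup M] [Module k M]
    {u : G →ₗ[k] M} (hu : Function.Injective u) {t : M} (ht : t ≠ 0)
    (hrange : LinearMap.range u = Submodule.span k {t}) :
    ∃ e : G ≃ₗ[k] k, ∀ x, u x = e x • t := by
  let f := LinearEquiv.toSpanNonzeroSingleton k M t ht
  refine ⟨(LinearEquiv.ofInjective u hu).trans ((LinearEquiv.ofEq _ _ hrange).trans f.symm),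
    fun x => ?_⟩
  simp [f]

variable (k G) (V : Type) [AddCommGroup V] [Module k V]

-- The relations defining `G ⊗_{k(Σ_2)} V^{⊗2}` when `Σ_2` acts trivially on `G`.
noncomputable def balancing : Submodule k (G ⊗[k] (V ⊗[k] V)) :=
  Submodule.span k {z | ∃ (x : G) (v : V ⊗[k] V), z = x ⊗ₜ v - x ⊗ₜ TensorProduct.comm k V V v}

variable {k G V} (e : G ≃ₗ[k] k)

noncomputable def scalarTensorEquiv (W : Type) [AddCommGroup W] [Module k W] :
    G ⊗[k] W ≃ₗ[k] W :=
  (TensorProduct.congr e (LinearEquiv.refl k W)).trans (TensorProduct.lid k W)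

@[simp]
lemma scalarTensorEquiv_tmul {W : Type} [AddCommGroup W] [Module k W] (x : G) (w : W) :
    scalarTensorEquiv e W (x ⊗ₜ w) = e x • w := by
  simp [scalarTensorEquiv]

lemma map_balancing :
    (balancing k G V).map (scalarTensorEquiv e (V ⊗[k] V) : G ⊗[k] (V ⊗[k] V) →ₗ[k] V ⊗[k] V)
      = L2 k V := by
  rw [balancing, Submodule.map_span, ← range_antisymmetrize]
  apply le_antisymm
  · rw [Submodule.span_le]
    rintro _ ⟨_, ⟨x, v, rfl⟩, rfl⟩
    exact ⟨e x • v, by simp [smul_sub]⟩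
  · rintro _ ⟨v, rfl⟩
    exact Submodule.subset_span
      ⟨e.symm 1 ⊗ₜ v - e.symm 1 ⊗ₜ TensorProduct.comm k V V v, ⟨_, _, rfl⟩, by simp⟩

noncomputable def coinvariantsEquivS2 : ((G ⊗[k] (V ⊗[k] V)) ⧸ balancing k G V) ≃ₗ[k] S2 k V :=
  Submodule.Quotient.equiv _ _ (scalarTensorEquiv e _) (map_balancing e)

noncomputable def coinvariantsToTensor [CharP k 2] :
    (G ⊗[k] (V ⊗[k] V)) ⧸ balancing k G V →ₗ[k] V ⊗[k] V :=
  (balancing k G V).liftQ (antisymmetrize k V ∘ₗ (scalarTensorEquiv e _).toLinearMap) <| by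
    rw [LinearMap.ker_comp, ← Submodule.map_le_iff_le_comap, map_balancing]
    exact (L2_le_L2res k V).trans (L2res_le_ker_antisymmetrize k V)

variable [CharP k 2]

lemma coinvariantsToTensor_mk (x : G) (v : V ⊗[k] V) :
    coinvariantsToTensor e (Submodule.Quotient.mk (x ⊗ₜ v)) = e x • antisymmetrize k V v := by
  simp [coinvariantsToTensor]

lemma range_coinvariantsToTensor : LinearMap.range (coinvariantsToTensor (V := V) e) = L2 k V := by
  rw [coinvariantsToTensor, Submodule.range_liftQ,
    LinearMap.range_comp_of_range_eq_top _ (LinearEquiv.range _), range_antisymmetrize]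

end Coinvariants

/-- Over a field of characteristic `2` and `dim V ≥ 1`: `γ_2(L_2^{res}) = γ_2(L_2)` is the
one-dimensional trivial `k(Σ_2)`-module spanned by `x_1 ⊗ x_2 + x_2 ⊗ x_1`; the coinvariants
`γ_2(L_2^{res}) ⊗_{k(Σ_2)} V^{⊗2}` are isomorphic to the symmetric square `S_2(V)`; and the
natural map `γ_2(L_2^{res}) ⊗_{k(Σ_2)} V^{⊗2} → L_2^{res}(V)` has image exactly `L_2(V)`, hence
is not surjective. -/
theorem stmt10 (k : Type) [Field k] [CharP k 2] (V : Type) [AddCommGroup V] [Module k V]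
    (hV : 1 ≤ Module.rank k V) :
    -- γ_2(L_2^res) = γ_2(L_2), one-dimensional, spanned by x₁⊗x₂ + x₂⊗x₁, with trivial action
    gamma2Of k (L2res k (Fin 2 → k)) = gamma2Of k (L2 k (Fin 2 → k)) ∧
    gamma2Of k (L2res k (Fin 2 → k))
      = Submodule.span k {(Pi.single 0 1 : Fin 2 → k) ⊗ₜ[k] (Pi.single 1 1 : Fin 2 → k)
          + (Pi.single 1 1 : Fin 2 → k) ⊗ₜ[k] (Pi.single 0 1 : Fin 2 → k)} ∧
    Module.finrank k (gamma2Of k (L2res k (Fin 2 → k))) = 1 ∧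
    (∀ y ∈ gamma2Of k (L2res k (Fin 2 → k)),
      TensorProduct.map (swapV k) (swapV k) y = y) ∧
    -- coinvariants and the natural map, with γ_2 realized by an abstract module G
    (∀ (G : Type) [AddCommGroup G] [Module k G] (u : G →ₗ[k] (Fin 2 → k) ⊗[k] (Fin 2 → k)),
      Function.Injective u →
      LinearMap.range u = gamma2Of k (L2res k (Fin 2 → k)) →
      -- the balancing relations for ⊗_{k(Σ_2)}
      ∀ rel : Submodule k (G ⊗[k] (V ⊗[k] V)),
        rel = Submodule.span k
          {z | ∃ (x y : G) (v : V ⊗[k] V),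
              u y = TensorProduct.map (swapV k) (swapV k) (u x) ∧
              z = y ⊗ₜ[k] v - x ⊗ₜ[k] (TensorProduct.comm k V V v)} →
        -- γ_2(L_2^res) ⊗_{k(Σ_2)} V^{⊗2} ≅ S_2(V)
        Nonempty (((G ⊗[k] (V ⊗[k] V)) ⧸ rel) ≃ₗ[k] S2 k V) ∧
        -- the natural map to L_2^res(V) has image L_2(V) and is not surjective
        ∃ c : ((G ⊗[k] (V ⊗[k] V)) ⧸ rel) →ₗ[k] V ⊗[k] V,
          (∀ x : G,
            u x = (Pi.single 0 1 : Fin 2 → k) ⊗ₜ[k] (Pi.single 1 1 : Fin 2 → k)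
                - (Pi.single 1 1 : Fin 2 → k) ⊗ₜ[k] (Pi.single 0 1 : Fin 2 → k) →
            ∀ a b : V,
              c (Submodule.Quotient.mk (x ⊗ₜ[k] (a ⊗ₜ[k] b))) = a ⊗ₜ[k] b - b ⊗ₜ[k] a) ∧
          LinearMap.range c = L2 k V ∧
          LinearMap.range c ≤ L2res k V ∧
          LinearMap.range c ≠ L2res k V) := by
  obtain ⟨a₀, ha₀⟩ : ∃ a : V, a ≠ 0 := rank_pos_iff_exists_ne_zero.mp (zero_lt_one.trans_le hV)
  have hres := gamma2Of_eq_span_symTensor12 le_rfl (L2_le_L2res k _ symTensor12_mem_L2)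
  have hL2 := gamma2Of_eq_span_symTensor12 (L2_le_L2res k _) symTensor12_mem_L2
  refine ⟨hres.trans hL2.symm, hres, ?_, ?_, ?_⟩
  · rw [hres]
    exact finrank_span_singleton symTensor12_ne_zero
  · intro y hy
    obtain ⟨c, rfl⟩ := Submodule.mem_span_singleton.mp (hres ▸ hy)
    rw [map_smul, map_swapV_symTensor12]
  · intro G _ _ u hu hrange rel hrel
    obtain ⟨e, he⟩ :=
      exists_linearEquiv_of_range_eq_span hu symTensor12_ne_zero (hrange.trans hres)
    have hfix : ∀ x, TensorProduct.map (swapV k) (swapV k) (u x) = u x := fun x => by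
      rw [he, map_smul, map_swapV_symTensor12]
    obtain rfl : rel = balancing k G V := by
      simp only [hrel, balancing, hfix, hu.eq_iff, exists_and_left, exists_eq_left]
    have hc := range_coinvariantsToTensor (V := V) e
    refine ⟨⟨coinvariantsEquivS2 e⟩, coinvariantsToTensor e, fun x hx a b => ?_, hc,
      hc ▸ L2_le_L2res k V, hc ▸ L2_ne_L2res ha₀⟩
    have hex : e x = 1 := by
      refine smul_left_injective k (symTensor12_ne_zero (k := k)) ?_
      change e x • _ = (1 : k) • _
      rw [one_smul, ← he, hx, symTensor12_eq_sub]
    rw [coinvariantsToTensor_mk, hex, one_smul, antisymmetrize_tmul]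
end
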